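/- The facet list of W₁₂⁴⁰ is self-dual: the bipartite incidence structure between the 12 vertices {0,...,11} and the 12 facets F₁,...,F₁₂ admits an incidence-reversing bijection, i.e., there exist bijections σ from vertices to facets and τ from facets to vertices such that vertex v lies in facet F if and only if τ(F) lies in σ(v). -/
import Mathlib

/-- The facet list of Werner's sphere W₁₂⁴⁰: facets F₁,…,F₁₂ (indexed 0,…,11)
as subsets of the vertex set {0,…,11}. -/
def W : Fin 12 → Finset (Fin 12) :=
  ![{0,1,2,3}, {0,2,3,4,5,6,7}, {0,1,3,4,8,9}, {0,1,2,6,9,10}, {0,4,7,8},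
    {0,5,6,10}, {0,5,7,8,9,10}, {1,2,3,4,10,11}, {2,5,6,8,10,11},
    {1,8,9,10,11}, {1,4,5,7,8,11}, {2,4,5,11}]

def sigmaF : Fin 12 ≃ Fin 12 :=
  Equiv.mk ![1,7,2,0,3,6,4,5,8,11,10,9] ![3,0,2,4,6,7,5,1,8,11,10,9]
    (by decide) (by decide)

def tauF : Fin 12 ≃ Fin 12 :=
  Equiv.mk ![3,0,2,4,6,7,5,1,8,11,10,9] ![1,7,2,0,3,6,4,5,8,11,10,9]
    (by decide) (by decide)

theorem stmt18 :
    ∃ (σ : Fin 12 ≃ Fin 12) (τ : Fin 12 ≃ Fin 12),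
      ∀ v j : Fin 12, v ∈ W j ↔ τ j ∈ W (σ v) := by
  exact ⟨sigmaF, tauF, by decide⟩
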